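/- Coinductive characterization of specialization: let M be an input-complete IGMM. Then (a) for all states q, q' of M, if q' ⊑ q then for every i ∈ 𝔹^I, λ(q',i) ⊆ λ(q,i) and δ(q',i) ⊑ δ(q,i); and (b) for every binary relation R on Q such that R(q',q) implies λ(q',i) ⊆ λ(q,i) and R(δ(q',i), δ(q,i)) for every i ∈ 𝔹^I, R(q',q) implies q' ⊑ q. In other words, ⊑ is the coarsest relation satisfying this unfolding condition. -/
import Mathlib


/-- An incompletely specified generalized Mealy machine (IGMM) over input
propositions `I`, output propositions `O`, with state set `Q`.
Input valuations are `I → Bool`, output valuations are `O → Bool`.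
`delta` is the partial transition function, `lam` the output function. -/
structure IGMM (I O Q : Type*) where
  init : Q
  delta : Q → (I → Bool) → Option Q
  lam : Q → (I → Bool) → Set (O → Bool)
  lam_nonempty : ∀ q i, (lam q i).Nonempty
  lam_top : ∀ q i, delta q i = none → lam q i = Set.univ

namespace IGMM

/-- `(ι, o) ⊨ M_q` : either an infinite run, or a finite run ending where `delta`
is undefined. -/
def Sat {I O Q : Type*} (M : IGMM I O Q) (q : Q) (ι : ℕ → I → Bool)
    (o : ℕ → O → Bool) : Prop :=
  (∃ qs : ℕ → Q, qs 0 = q ∧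
      ∀ j : ℕ, M.delta (qs j) (ι j) = some (qs (j + 1)) ∧ o j ∈ M.lam (qs j) (ι j)) ∨
  (∃ (k : ℕ) (qs : ℕ → Q), qs 0 = q ∧
      (∀ j < k, M.delta (qs j) (ι j) = some (qs (j + 1)) ∧ o j ∈ M.lam (qs j) (ι j)) ∧
      M.delta (qs k) (ι k) = none)

/-- The behaviour set `Beh_M(q, ι) = {o | (ι, o) ⊨ M_q}`. -/
def Beh {I O Q : Type*} (M : IGMM I O Q) (q : Q) (ι : ℕ → I → Bool) :
    Set (ℕ → O → Bool) :=
  {o | M.Sat q ι o}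

end IGMM

/-- `q' ⊑ q` : the state `q'` of `M'` is a specialization of the state `q` of `M`. -/
def IGMM.Specializes {I O Q' Q : Type*} (M' : IGMM I O Q') (q' : Q')
    (M : IGMM I O Q) (q : Q) : Prop :=
  ∀ ι : ℕ → I → Bool, M'.Beh q' ι ⊆ M.Beh q ι

/-- `q' ≈ q` : the state `q'` of `M'` is a variation of the state `q` of `M`. -/
def IGMM.IsVariation {I O Q' Q : Type*} (M' : IGMM I O Q') (q' : Q')
    (M : IGMM I O Q) (q : Q) : Prop :=
  ∀ ι : ℕ → I → Bool, (M'.Beh q' ι ∩ M.Beh q ι).Nonempty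

section Aux

variable {I O Q : Type*}

/-- The unique run of an input-complete machine. -/
def IGMMrun (d : Q → (I → Bool) → Q) (q : Q) (ι : ℕ → I → Bool) : ℕ → Q
  | 0 => q
  | j + 1 => d (IGMMrun d q ι j) (ι j)

lemma IGMMrun_shift (d : Q → (I → Bool) → Q) (q : Q) (ι : ℕ → I → Bool) (j : ℕ) :
    IGMMrun d q ι (j + 1) = IGMMrun d (d q (ι 0)) (fun n => ι (n + 1)) j := by
  induction j with
  | zero => rfl
  | succ j ih =>
    show d (IGMMrun d q ι (j + 1)) (ι (j + 1)) = _
    rw [ih]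
    rfl

lemma IGMM.sat_iff (M : IGMM I O Q) (d : Q → (I → Bool) → Q)
    (hd : ∀ q i, M.delta q i = some (d q i)) (q : Q) (ι : ℕ → I → Bool)
    (o : ℕ → O → Bool) :
    M.Sat q ι o ↔ ∀ j, o j ∈ M.lam (IGMMrun d q ι j) (ι j) := by
  constructor
  · rintro (⟨qs, h0, h⟩ | ⟨k, qs, h0, h, hk⟩)
    · have hqs : ∀ j, qs j = IGMMrun d q ι j := by
        intro j
        induction j with
        | zero => exact h0
        | succ j ih =>
          have := (h j).1
          rw [hd] at this
          have := Option.some.inj this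
          simp only [IGMMrun, ← ih, ← this]
      intro j
      rw [← hqs j]
      exact (h j).2
    · rw [hd] at hk
      exact absurd hk (by simp)
  · intro h
    left
    exact ⟨IGMMrun d q ι, rfl, fun j => ⟨hd _ _, h j⟩⟩

lemma IGMM.beh_iff (M : IGMM I O Q) (d : Q → (I → Bool) → Q)
    (hd : ∀ q i, M.delta q i = some (d q i)) (q : Q) (ι : ℕ → I → Bool)
    (o : ℕ → O → Bool) :
    o ∈ M.Beh q ι ↔ ∀ j, o j ∈ M.lam (IGMMrun d q ι j) (ι j) :=
  M.sat_iff d hd q ι o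

end Aux

/-- coinductive characterization of specialization for an
input-complete machine (input-completeness witnessed by the total function `d`
underlying `δ`): (a) `⊑` satisfies the unfolding condition, and (b) `⊑` is the
coarsest relation satisfying it. -/
theorem specialization_coinductive {I O Q : Type*}
    [Fintype I] [Fintype O] [Fintype Q]
    (M : IGMM I O Q) (d : Q → (I → Bool) → Q)
    (hd : ∀ (q : Q) (i : I → Bool), M.delta q i = some (d q i)) :
    (∀ q q' : Q, IGMM.Specializes M q' M q →
        ∀ i : I → Bool, M.lam q' i ⊆ M.lam q i ∧
          IGMM.Specializes M (d q' i) M (d q i)) ∧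
    (∀ R : Q → Q → Prop,
        (∀ q' q : Q, R q' q →
          ∀ i : I → Bool, M.lam q' i ⊆ M.lam q i ∧ R (d q' i) (d q i)) →
        ∀ q' q : Q, R q' q → IGMM.Specializes M q' M q) := by
  constructor
  · intro q q' hspec i
    constructor
    · -- λ(q',i) ⊆ λ(q,i)
      intro o₀ ho₀
      set ι : ℕ → I → Bool := fun _ => i with hι
      set o : ℕ → O → Bool := fun j =>
        if j = 0 then o₀ else (M.lam_nonempty (IGMMrun d q' ι j) i).choose with ho
      have hmem : o ∈ M.Beh q' ι := by
        rw [M.beh_iff d hd]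
        intro j
        cases j with
        | zero => simpa [ho, IGMMrun] using ho₀
        | succ j =>
          simp only [ho, Nat.succ_ne_zero, if_false]
          exact (M.lam_nonempty (IGMMrun d q' ι (j + 1)) i).choose_spec
      have := hspec ι hmem
      rw [M.beh_iff d hd] at this
      simpa [ho, IGMMrun] using this 0
    · -- δ(q',i) ⊑ δ(q,i)
      intro ι o hmem
      set ι' : ℕ → I → Bool := fun j => if j = 0 then i else ι (j - 1) with hι'
      have hι'0 : ι' 0 = i := rfl
      have hι's : (fun n => ι' (n + 1)) = ι := by funext n; simp [hι']
      set o₀ := (M.lam_nonempty q' i).choose with ho₀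
      set o' : ℕ → O → Bool := fun j => if j = 0 then o₀ else o (j - 1) with ho'
      have hmem' : o' ∈ M.Beh q' ι' := by
        rw [M.beh_iff d hd]
        intro j
        cases j with
        | zero =>
          simpa [ho', IGMMrun, hι'] using (M.lam_nonempty q' i).choose_spec
        | succ j =>
          rw [M.beh_iff d hd] at hmem
          have := hmem j
          rw [IGMMrun_shift, hι'0, hι's]
          simpa [ho', hι'] using this
      have := hspec ι' hmem'
      rw [M.beh_iff d hd] at this
      rw [M.beh_iff d hd]
      intro j
      have hj := this (j + 1)
      rw [IGMMrun_shift, hι'0, hι's] at hj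
      simpa [ho', hι'] using hj
  · intro R hR q' q hq ι o hmem
    rw [M.beh_iff d hd] at hmem ⊢
    have hrun : ∀ j, R (IGMMrun d q' ι j) (IGMMrun d q ι j) := by
      intro j
      induction j with
      | zero => exact hq
      | succ j ih => exact (hR _ _ ih (ι j)).2
    intro j
    exact (hR _ _ (hrun j) (ι j)).1 (hmem j)
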